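/- Let G be a graph, S* an optimal odd cycle transversal of G of size opt, 𝒯 a triangle packing in G with |𝒯| = a·opt, and 𝒯'' a triangle packing with |𝒯''| = r·opt such that every triangle in 𝒯'' contains at least one vertex outside V(𝒯). Then |S* ∩ (V(𝒯'') ∩ V(𝒯))| ≥ (r − (1 − a))·opt, and hence the minimum odd cycle transversal of G − (V(𝒯'') ∩ V(𝒯)) has size at most (2 − a − r)·opt. -/
import Mathlib


open Finset

def IsOCT {V : Type*} (G : SimpleGraph V) (S : Set V) : Prop :=
  (G.induce Sᶜ).Colorable 2

def IsTriangle {V : Type*} (G : SimpleGraph V) (T : Finset V) : Prop :=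
  T.card = 3 ∧ ∀ u ∈ T, ∀ v ∈ T, u ≠ v → G.Adj u v

def IsPacking {V : Type*} (𝒯 : Finset (Finset V)) : Prop :=
  (𝒯 : Set (Finset V)).Pairwise fun A B => Disjoint A B

lemma oct_mono {V : Type*} (G : SimpleGraph V) {S S' : Set V} (h : S ⊆ S')
    (hS : IsOCT G S) : IsOCT G S' := by
  obtain ⟨C⟩ := hS
  refine ⟨SimpleGraph.Coloring.mk (fun v => C ⟨v.1, fun hv => v.2 (h hv)⟩) ?_⟩
  intro u v huv hcc
  exact C.valid (by exact huv) hcc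

lemma oct_hits_triangle {V : Type*} [DecidableEq V] (G : SimpleGraph V)
    (S : Finset V) (hS : IsOCT G ↑S) {T : Finset V} (hT : IsTriangle G T) :
    ∃ x ∈ T, x ∈ S := by
  by_contra hcon
  push_neg at hcon
  obtain ⟨u, v, w, huv, huw, hvw, hT3⟩ := Finset.card_eq_three.mp hT.1
  have hmem : ∀ x ∈ T, x ∈ (↑S : Set V)ᶜ := fun x hx => hcon x hx
  have hu : u ∈ T := by rw [hT3]; simp
  have hv : v ∈ T := by rw [hT3]; simp
  have hw : w ∈ T := by rw [hT3]; simp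
  obtain ⟨C⟩ := hS
  set cu := C ⟨u, hmem u hu⟩ with hcu
  set cv := C ⟨v, hmem v hv⟩ with hcv
  set cw := C ⟨w, hmem w hw⟩ with hcw
  have h1 : cu ≠ cv := C.valid (hT.2 u hu v hv huv)
  have h2 : cu ≠ cw := C.valid (hT.2 u hu w hw huw)
  have h3 : cv ≠ cw := C.valid (hT.2 v hv w hw hvw)
  have e1 : cu.val ≠ cv.val := fun h => h1 (Fin.ext h)
  have e2 : cu.val ≠ cw.val := fun h => h2 (Fin.ext h)
  have e3 : cv.val ≠ cw.val := fun h => h3 (Fin.ext h)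
  have l1 := cu.isLt
  have l2 := cv.isLt
  have l3 := cw.isLt
  omega

lemma packing_count {V : Type*} [DecidableEq V] (P : Finset (Finset V))
    (hp : IsPacking P) (A : Finset V) (h : ∀ T ∈ P, ∃ x ∈ T, x ∈ A) :
    P.card ≤ A.card := by
  choose f hf1 hf2 using h
  have : P.attach.card ≤ A.card := by
    apply Finset.card_le_card_of_injOn (fun T => f T.1 T.2)
      (fun T _ => hf2 T.1 T.2)
    intro T1 _ T2 _ heq
    by_contra hne
    have hne' : T1.1 ≠ T2.1 := fun h => hne (Subtype.ext h)
    have hd := hp T1.2 T2.2 hne'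
    simp only at heq
    have h2 : f T2.1 T2.2 ∈ T2.1 := hf1 T2.1 T2.2
    rw [← heq] at h2
    exact (Finset.disjoint_left.mp hd) (hf1 T1.1 T1.2) h2
  simpa using this

theorem stmt10 {V : Type*} [DecidableEq V] [Fintype V] (G : SimpleGraph V)
    (Sstar : Finset V) (hSstar : IsOCT G ↑Sstar)
    (hmin : ∀ S : Finset V, IsOCT G ↑S → Sstar.card ≤ S.card)
    (opt : ℕ) (hopt : Sstar.card = opt)
    (a r : ℝ)
    (𝒯 : Finset (Finset V)) (h𝒯 : ∀ T ∈ 𝒯, IsTriangle G T) (hpack : IsPacking 𝒯)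
    (ha : (𝒯.card : ℝ) = a * opt)
    (𝒯'' : Finset (Finset V)) (h𝒯'' : ∀ T ∈ 𝒯'', IsTriangle G T)
    (hpack'' : IsPacking 𝒯'')
    (hr : (𝒯''.card : ℝ) = r * opt)
    (hout : ∀ T ∈ 𝒯'', ¬ T ⊆ 𝒯.biUnion id) :
    ((r - (1 - a)) * opt ≤ ((Sstar ∩ (𝒯''.biUnion id ∩ 𝒯.biUnion id)).card : ℝ)) ∧
      ∃ S' : Finset V, Disjoint S' (𝒯''.biUnion id ∩ 𝒯.biUnion id) ∧
        IsOCT G ↑(S' ∪ (𝒯''.biUnion id ∩ 𝒯.biUnion id)) ∧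
        ((S'.card : ℝ) ≤ (2 - a - r) * opt) := by
  set B : Finset V := 𝒯.biUnion id with hB
  set B'' : Finset V := 𝒯''.biUnion id with hB''
  set W : Finset V := B'' ∩ B with hW
  -- each triangle in 𝒯 or 𝒯'' meets Sstar
  have hhit : ∀ T ∈ 𝒯, ∃ x ∈ T, x ∈ Sstar :=
    fun T hT => oct_hits_triangle G Sstar hSstar (h𝒯 T hT)
  have hhit'' : ∀ T ∈ 𝒯'', ∃ x ∈ T, x ∈ Sstar :=
    fun T hT => oct_hits_triangle G Sstar hSstar (h𝒯'' T hT)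
  -- |𝒯| ≤ |Sstar ∩ B|
  have h1 : 𝒯.card ≤ (Sstar ∩ B).card := by
    apply packing_count 𝒯 hpack
    intro T hT
    obtain ⟨x, hx1, hx2⟩ := hhit T hT
    exact ⟨x, hx1, Finset.mem_inter.mpr ⟨hx2, Finset.mem_biUnion.mpr ⟨T, hT, hx1⟩⟩⟩
  -- bad / good
  set bad := 𝒯''.filter (fun T => ∃ x ∈ T, x ∈ Sstar ∧ x ∉ B) with hbad
  set good := 𝒯''.filter (fun T => ¬ ∃ x ∈ T, x ∈ Sstar ∧ x ∉ B) with hgood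
  have hsplit : bad.card + good.card = 𝒯''.card := Finset.card_filter_add_card_filter_not _
  have hbadpack : IsPacking bad :=
    hpack''.mono (Finset.coe_subset.mpr (Finset.filter_subset _ _))
  have hgoodpack : IsPacking good :=
    hpack''.mono (Finset.coe_subset.mpr (Finset.filter_subset _ _))
  -- bad ≤ |Sstar \ B|
  have h2 : bad.card ≤ (Sstar \ B).card := by
    apply packing_count bad hbadpack
    intro T hT
    obtain ⟨x, hx1, hx2, hx3⟩ := (Finset.mem_filter.mp hT).2
    exact ⟨x, hx1, Finset.mem_sdiff.mpr ⟨hx2, hx3⟩⟩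
  -- good ≤ |Sstar ∩ W|
  have h3 : good.card ≤ (Sstar ∩ W).card := by
    apply packing_count good hgoodpack
    intro T hT
    have hTmem := (Finset.mem_filter.mp hT).1
    have hTgood := (Finset.mem_filter.mp hT).2
    push_neg at hTgood
    obtain ⟨x, hx1, hx2⟩ := hhit'' T hTmem
    have hxB : x ∈ B := hTgood x hx1 hx2
    have hxB'' : x ∈ B'' := Finset.mem_biUnion.mpr ⟨T, hTmem, hx1⟩
    exact ⟨x, hx1, Finset.mem_inter.mpr ⟨hx2, Finset.mem_inter.mpr ⟨hxB'', hxB⟩⟩⟩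
  -- |Sstar ∩ B| + |Sstar \ B| = opt
  have h4 : (Sstar ∩ B).card + (Sstar \ B).card = opt := by
    rw [← hopt]
    rw [Finset.card_inter_add_card_sdiff]
  -- Part 1
  have part1 : (r - (1 - a)) * opt ≤ ((Sstar ∩ W).card : ℝ) := by
    have c1 : ((𝒯.card : ℝ)) ≤ ((Sstar ∩ B).card : ℝ) := by exact_mod_cast h1
    have c2 : ((bad.card : ℝ)) ≤ ((Sstar \ B).card : ℝ) := by exact_mod_cast h2
    have c3 : ((good.card : ℝ)) ≤ ((Sstar ∩ W).card : ℝ) := by exact_mod_cast h3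
    have c4 : ((Sstar ∩ B).card : ℝ) + ((Sstar \ B).card : ℝ) = (opt : ℝ) := by
      exact_mod_cast h4
    have c5 : ((bad.card : ℝ)) + ((good.card : ℝ)) = ((𝒯''.card : ℝ)) := by
      exact_mod_cast hsplit
    nlinarith [c1, c2, c3, c4, c5, ha, hr]
  refine ⟨part1, Sstar \ W, Finset.sdiff_disjoint, ?_, ?_⟩
  · apply oct_mono G _ hSstar
    intro x hx
    simp only [Finset.coe_union, Set.mem_union, Finset.mem_coe]
    by_cases hxW : x ∈ W
    · right; exact hxW
    · left; exact Finset.mem_sdiff.mpr ⟨hx, hxW⟩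
  · have hc : (Sstar \ W).card + (Sstar ∩ W).card = opt := by
      rw [← hopt, Finset.card_sdiff_add_card_inter]
    have : ((Sstar \ W).card : ℝ) + ((Sstar ∩ W).card : ℝ) = (opt : ℝ) := by
      exact_mod_cast hc
    linarith [part1]
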